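/- arXiv:2408.00876 — 4 statements merged into one kernel-verified Lean document; each statement's English description precedes it below -/
import Mathlib

section
/- For every ε with 0 < ε < 1/4 there exists d₀ ∈ ℕ such that for all d ≥ d₀, for every subset A ⊆ {0,…,d−1} with d/3 ≤ |A| ≤ d/2 and B its complement, setting M = ⌈2^{(1/4−ε)·d}⌉, there exist at least M distinct assignments x : A → {0,1} each of which admits at least 2M² + 1 assignments y : B → {0,1} such that ι_A(x) + ι_B(y) + 1 is prime. -/
/-!
Every integer in `[1, 2^d]` is `ι_A(x) + ι_B(y) + 1` for exactly one pair `(x, y)`, so the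
numbers of prime completions of the `2^|A|` assignments `x` add up to `π(2^d) ≳ 2^d / d`
(Chebyshev). Each `x` has at most `2^|B|` completions, so if fewer than `M` assignments had more
than `2M²` of them, the total would be at most `M 2^|B| + 2^|A| 2M² = O(2^{(1-ε)d})`, which is
too small once `2^{εd}` outgrows `d`.
-/

/-- The encoding ι_A(x) = ∑_{i∈A} 2^i · x(i) of an assignment x : A → {0,1}. -/
def enc (A : Finset ℕ) (x : A → Fin 2) : ℕ := ∑ i : A, 2 ^ (i : ℕ) * (x i : ℕ)

open Finset Filter
open scoped Nat.Prime

def digitAssignment (A : Finset ℕ) (n : ℕ) : A → Fin 2 :=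
  fun i => if n.testBit i then 1 else 0

def primeCompletions (A B : Finset ℕ) (x : A → Fin 2) : Finset (B → Fin 2) :=
  {y | (enc A x + enc B y + 1).Prime}

theorem Nat.sum_range_two_pow_mul_testBit (d n : ℕ) :
    ∑ i ∈ range d, 2 ^ i * (n.testBit i).toNat = n % 2 ^ d := by
  induction d with
  | zero => simp [Nat.mod_one]
  | succ d ih =>
    rw [sum_range_succ, ih, Nat.mod_pow_succ, Nat.testBit_eq_decide_div_mod_eq]
    rcases Nat.mod_two_eq_zero_or_one (n / 2 ^ d) with h | h <;> simp [h]

theorem enc_digitAssignment (A : Finset ℕ) (n : ℕ) :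
    enc A (digitAssignment A n) = ∑ i ∈ A, 2 ^ i * (n.testBit i).toNat := by
  rw [enc, ← sum_attach A]
  refine sum_congr rfl fun i _ => ?_
  unfold digitAssignment
  cases n.testBit i <;> rfl

theorem enc_digitAssignment_add_compl {d : ℕ} {A : Finset ℕ} (hA : A ⊆ range d) {n : ℕ}
    (hn : n < 2 ^ d) :
    enc A (digitAssignment A n) + enc (range d \ A) (digitAssignment (range d \ A) n) = n := by
  rw [enc_digitAssignment, enc_digitAssignment, add_comm, sum_sdiff hA,
    Nat.sum_range_two_pow_mul_testBit, Nat.mod_eq_of_lt hn]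

theorem primeCounting_two_pow_le_sum_card_primeCompletions {d : ℕ} {A : Finset ℕ}
    (hA : A ⊆ range d) :
    π (2 ^ d) ≤ ∑ x : A → Fin 2, #(primeCompletions A (range d \ A) x) := by
  have hsum : ∑ x : A → Fin 2, #(primeCompletions A (range d \ A) x) =
      #({p | (enc A p.1 + enc (range d \ A) p.2 + 1).Prime} :
        Finset ((A → Fin 2) × (↥(range d \ A) → Fin 2))) := by
    simp only [primeCompletions, card_filter, Fintype.sum_prod_type]
  rw [hsum, ← Nat.primesLE_card_eq_primeCounting]
  refine card_le_card_of_surjOn (fun y => enc A y.1 + enc (range d \ A) y.2 + 1) fun p hp => ?_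
  obtain ⟨hp, hprime⟩ := Nat.mem_primesLE.1 hp
  have hsplit : enc A (digitAssignment A (p - 1)) +
      enc (range d \ A) (digitAssignment (range d \ A) (p - 1)) + 1 = p := by
    have := hprime.one_le
    rw [enc_digitAssignment_add_compl hA (by omega)]
    omega
  exact ⟨(digitAssignment A (p - 1), digitAssignment (range d \ A) (p - 1)),
    by simpa [hsplit], hsplit⟩

theorem Finset.sum_le_card_filter_lt_mul_add {ι : Type*} (s : Finset ι) (f : ι → ℕ) {N : ℕ}
    (hf : ∀ i ∈ s, f i ≤ N) (t : ℕ) :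
    ∑ i ∈ s, f i ≤ #{i ∈ s | t < f i} * N + #s * t := by
  rw [← sum_filter_add_sum_filter_not s (fun i => t < f i)]
  gcongr
  · exact sum_le_card_nsmul _ _ _ fun i hi => hf i (mem_filter.1 hi).1
  · calc _ ≤ #{i ∈ s | ¬t < f i} * t :=
          sum_le_card_nsmul _ _ _ fun i hi => not_lt.1 (mem_filter.1 hi).2
      _ ≤ #s * t := by gcongr; exact filter_subset _ _

theorem two_pow_le_mul_primeCounting_two_pow {d : ℕ} (hd : 0 < d) :
    2 ^ d ≤ d * (π (2 ^ d) + 2) := by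
  have hcheb := Chebyshev.pi_ge (2 ^ d)
  push_cast at hcheb
  rw [Real.log_pow, div_le_iff₀ (by positivity)] at hcheb
  have hlog : Real.log (2 ^ d + 1) ≤ (d + 1) * Real.log 2 := by
    rw [← Nat.cast_succ, ← Real.log_pow]
    gcongr
    rw [pow_succ]
    linarith [one_le_pow₀ (M₀ := ℝ) (n := d) one_le_two]
  have h : (2 : ℝ) ^ d - (d + 1) ≤ π (2 ^ d) * d :=
    le_of_mul_le_mul_right (by linarith) (Real.log_pos one_lt_two)
  have hd : (1 : ℝ) ≤ d := by exact_mod_cast hd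
  exact_mod_cast (show (2 : ℝ) ^ d ≤ d * (π (2 ^ d) + 2) by linarith)

theorem eventually_mul_lt_two_rpow (c : ℝ) {ε : ℝ} (hε : 0 < ε) :
    ∀ᶠ d : ℕ in atTop, c * d < (2 : ℝ) ^ (ε * d) := by
  have h := (isLittleO_coe_const_pow_of_one_lt (R := ℝ) (Real.one_lt_rpow one_lt_two hε)).bound
    (show (0 : ℝ) < 1 / (|c| + 1) by positivity)
  filter_upwards [h] with d hd
  rw [Real.norm_natCast, Real.norm_of_nonneg (by positivity), ← Real.rpow_natCast,
    ← Real.rpow_mul zero_le_two] at hd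
  rw [div_mul_eq_mul_div, one_mul, le_div_iff₀ (by positivity)] at hd
  have hpos : 0 < (2 : ℝ) ^ (ε * d) := by positivity
  have hc : c * d ≤ |c| * d := by gcongr; exact le_abs_self c
  nlinarith [abs_nonneg c, (Nat.cast_nonneg d : (0 : ℝ) ≤ d)]

theorem mul_two_pow_add_two_pow_mul_sq_le {ε : ℝ} (hε : 0 < ε) {a b d : ℕ} (hab : a + b = d)
    (ha₁ : (d : ℝ) / 3 ≤ a) (ha₂ : (a : ℝ) ≤ d / 2) {M : ℝ} (hM₀ : 0 ≤ M)
    (hM : M ≤ 2 * 2 ^ ((1 / 4 - ε) * d)) :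
    M * 2 ^ b + 2 ^ a * (2 * M ^ 2) ≤ 10 * 2 ^ ((1 - ε) * d) := by
  have hab : (a : ℝ) + b = d := by exact_mod_cast hab
  have h₁ : M * 2 ^ b ≤ 2 * 2 ^ ((1 - ε) * d) := calc
    M * 2 ^ b ≤ 2 * 2 ^ ((1 / 4 - ε) * d) * 2 ^ (b : ℝ) := by rw [Real.rpow_natCast]; gcongr
    _ = 2 * 2 ^ ((1 / 4 - ε) * d + b) := by rw [Real.rpow_add two_pos, mul_assoc]
    _ ≤ 2 * 2 ^ ((1 - ε) * d) := by gcongr <;> [norm_num; linarith]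
  have h₂ : 2 ^ a * (2 * M ^ 2) ≤ 8 * 2 ^ ((1 - ε) * d) := calc
    2 ^ a * (2 * M ^ 2) ≤ 2 ^ (a : ℝ) * (2 * (2 * 2 ^ ((1 / 4 - ε) * d)) ^ 2) := by
      rw [Real.rpow_natCast]; gcongr
    _ = 8 * 2 ^ (a + ((1 / 4 - ε) * d + (1 / 4 - ε) * d)) := by
      rw [Real.rpow_add two_pos, Real.rpow_add two_pos]; ring
    _ ≤ 8 * 2 ^ ((1 - ε) * d) := by
      gcongr <;> [norm_num; nlinarith [(Nat.cast_nonneg d : (0 : ℝ) ≤ d)]]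
  linarith

theorem le_card_filter_lt_card_primeCompletions {ε : ℝ} (hε : 0 < ε) (hε₁ : ε ≤ 1)
    {d : ℕ} (hd₀ : 0 < d) (hd : 12 * d < (2 : ℝ) ^ (ε * d)) {A : Finset ℕ} (hA : A ⊆ range d)
    (hA₁ : (d : ℝ) / 3 ≤ #A) (hA₂ : (#A : ℝ) ≤ d / 2) {M : ℕ}
    (hM : (M : ℝ) ≤ 2 * 2 ^ ((1 / 4 - ε) * d)) :
    M ≤ #{x | 2 * M ^ 2 < #(primeCompletions A (range d \ A) x)} := by
  by_contra! hS
  have hcard : #A + #(range d \ A) = d := by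
    rw [add_comm, card_sdiff_add_card_eq_card hA, card_range]
  have hsum : π (2 ^ d) ≤ M * 2 ^ #(range d \ A) + 2 ^ #A * (2 * M ^ 2) := calc
    π (2 ^ d) ≤ ∑ x : A → Fin 2, #(primeCompletions A (range d \ A) x) :=
      primeCounting_two_pow_le_sum_card_primeCompletions hA
    _ ≤ _ := sum_le_card_filter_lt_mul_add univ _ (N := 2 ^ #(range d \ A))
      (fun x _ => (card_le_univ _).trans (by simp)) _
    _ ≤ _ := by
      simp only [card_univ, Fintype.card_fun, Fintype.card_fin, Fintype.card_coe]; gcongr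
  have hcount : (π (2 ^ d) : ℝ) ≤ 10 * 2 ^ ((1 - ε) * d) := calc
    (π (2 ^ d) : ℝ) ≤ M * 2 ^ #(range d \ A) + 2 ^ #A * (2 * M ^ 2) := by exact_mod_cast hsum
    _ ≤ _ := mul_two_pow_add_two_pow_mul_sq_le hε hcard hA₁ hA₂ (Nat.cast_nonneg M) hM
  have hE : (1 : ℝ) ≤ 2 ^ ((1 - ε) * d) :=
    Real.one_le_rpow one_le_two (mul_nonneg (by linarith) (Nat.cast_nonneg d))
  have hd' : (1 : ℝ) ≤ d := by exact_mod_cast hd₀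
  have hgrowth : 2 ^ ((1 - ε) * d) * 2 ^ (ε * d) ≤ (2 : ℝ) ^ ((1 - ε) * d) * (12 * d) := calc
    2 ^ ((1 - ε) * d) * 2 ^ (ε * d) = (2 : ℝ) ^ d := by
      rw [← Real.rpow_add two_pos, ← Real.rpow_natCast]; ring_nf
    _ ≤ d * (π (2 ^ d) + 2) := by exact_mod_cast two_pow_le_mul_primeCounting_two_pow hd₀
    _ ≤ d * (10 * 2 ^ ((1 - ε) * d) + 2) := by gcongr
    _ ≤ 2 ^ ((1 - ε) * d) * (12 * d) := by nlinarith
  linarith [le_of_mul_le_mul_left hgrowth (by positivity)]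

/-- for 0 < ε < 1/4 and sufficiently large d, for any A ⊆ {0,…,d−1} with
d/3 ≤ |A| ≤ d/2 and B its complement, with M = ⌈2^{(1/4−ε)d}⌉, there are at least M
distinct assignments of A each admitting at least 2M² + 1 prime completions. -/
theorem stmt_2 :
    ∀ ε : ℝ, 0 < ε → ε < 1/4 →
    ∃ d₀ : ℕ, ∀ d : ℕ, d₀ ≤ d →
    ∀ A : Finset ℕ, A ⊆ Finset.range d →
      (d : ℝ) / 3 ≤ (A.card : ℝ) → (A.card : ℝ) ≤ (d : ℝ) / 2 →
    ∀ B : Finset ℕ, B = Finset.range d \ A →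
    ∀ M : ℕ, M = ⌈(2 : ℝ) ^ ((1/4 - ε) * d)⌉₊ →
    ∃ S : Finset (A → Fin 2), M ≤ S.card ∧
      ∀ x ∈ S, 2 * M ^ 2 + 1 ≤
        (Finset.univ.filter fun y : B → Fin 2 =>
          Nat.Prime (enc A x + enc B y + 1)).card := by
  intro ε hε hε₁
  obtain ⟨d₀, hd₀⟩ :=
    eventually_atTop.1 ((eventually_mul_lt_two_rpow 12 hε).and (eventually_gt_atTop 0))
  refine ⟨d₀, fun d hd A hA hA₁ hA₂ B hB M hM => ?_⟩
  subst hB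
  obtain ⟨hd, hd_pos⟩ := hd₀ d hd
  have hM' : (M : ℝ) ≤ 2 * 2 ^ ((1 / 4 - ε) * d) := by
    have h₁ : (1 : ℝ) ≤ 2 ^ ((1 / 4 - ε) * d) :=
      Real.one_le_rpow one_le_two (mul_nonneg (by linarith) (Nat.cast_nonneg d))
    have h₂ := Nat.ceil_lt_add_one (zero_le_one.trans h₁)
    rw [hM]
    linarith
  exact ⟨_, le_card_filter_lt_card_primeCompletions hε (by linarith) hd_pos hd hA hA₁ hA₂
    hM', fun x hx => (mem_filter.1 hx).2⟩
end

section
/- Let p be a prime and let S be a finite set of primes with p ∉ S. Then √p does not lie in the subfield of ℝ generated by the set {√q : q ∈ S}. -/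
/-!
If `s ∉ K` and `s² ∈ K`, every element of the field generated by `K` and `s` has the form
`u + v s` with `u, v ∈ K`. If moreover `t² ∈ K` for such an element, then expanding
`t² = u² + v² s² + 2uv s` shows `uv = 0` (as `s ∉ K`), i.e. `t ∈ K` or `t s ∈ K`.
Induction on `S` then proves more generally that `√n` is not in the field generated by
`{√q : q ∈ S}` whenever `n` is squarefree with a prime factor outside `S`: removing a prime `q`
from `S` replaces `n` by `n` or by the squarefree part of `nq`, and the latter still has the
prime factor.
-/

open Real

namespace Subfield

variable {F : Type*} [Field F] (K : Subfield F) {s : F}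

def adjoinSqrt (hs : s ∉ K) (hs2 : s * s ∈ K) : Subfield F where
  carrier := {x | ∃ u ∈ K, ∃ v ∈ K, x = u + v * s}
  one_mem' := ⟨1, K.one_mem, 0, K.zero_mem, by ring⟩
  zero_mem' := ⟨0, K.zero_mem, 0, K.zero_mem, by ring⟩
  add_mem' := by
    rintro _ _ ⟨u, hu, v, hv, rfl⟩ ⟨u', hu', v', hv', rfl⟩
    exact ⟨u + u', K.add_mem hu hu', v + v', K.add_mem hv hv', by ring⟩
  neg_mem' := by
    rintro _ ⟨u, hu, v, hv, rfl⟩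
    exact ⟨-u, K.neg_mem hu, -v, K.neg_mem hv, by ring⟩
  mul_mem' := by
    rintro _ _ ⟨u, hu, v, hv, rfl⟩ ⟨u', hu', v', hv', rfl⟩
    refine ⟨u * u' + v * v' * (s * s), ?_, u * v' + u' * v, ?_, by ring⟩
    · exact K.add_mem (K.mul_mem hu hu') (K.mul_mem (K.mul_mem hv hv') hs2)
    · exact K.add_mem (K.mul_mem hu hv') (K.mul_mem hu' hv)
  inv_mem' := by
    rintro _ ⟨u, hu, v, hv, rfl⟩
    rcases eq_or_ne (u + v * s) 0 with h0 | h0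
    · exact ⟨0, K.zero_mem, 0, K.zero_mem, by simp [h0]⟩
    have hconj : u - v * s ≠ 0 := by
      intro hc
      have hv0 : v ≠ 0 := by
        rintro rfl
        exact h0 (by simpa using hc)
      exact hs (by rw [show s = u / v by field_simp; linear_combination -hc]; exact K.div_mem hu hv)
    -- `(u + v s)⁻¹ = (u - v s) / N` with the norm `N = (u + v s)(u - v s) ∈ K`
    have hN : u * u - v * v * (s * s) ≠ 0 := by
      rw [show u * u - v * v * (s * s) = (u + v * s) * (u - v * s) by ring]
      exact mul_ne_zero h0 hconj
    have hNK : u * u - v * v * (s * s) ∈ K :=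
      K.sub_mem (K.mul_mem hu hu) (K.mul_mem (K.mul_mem hv hv) hs2)
    refine ⟨u / _, K.div_mem hu hNK, -v / _, K.div_mem (K.neg_mem hv) hNK,
      (eq_inv_of_mul_eq_one_left ?_).symm⟩
    rw [← div_self hN]
    ring

theorem exists_eq_add_mul_of_mem_closure_insert (hs : s ∉ K) (hs2 : s * s ∈ K) {x : F}
    (hx : x ∈ closure (insert s (K : Set F))) : ∃ u ∈ K, ∃ v ∈ K, x = u + v * s := by
  refine (closure_le (t := K.adjoinSqrt hs hs2)).mpr ?_ hx
  rintro x (rfl | hxK)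
  · exact ⟨0, K.zero_mem, 1, K.one_mem, by ring⟩
  · exact ⟨x, hxK, 0, K.zero_mem, by ring⟩

theorem mem_or_mul_mem_of_mem_closure_insert (h2 : (2 : F) ≠ 0) (hs : s ∉ K)
    (hs2 : s * s ∈ K) {t : F} (ht2 : t * t ∈ K) (ht : t ∈ closure (insert s (K : Set F))) :
    t ∈ K ∨ t * s ∈ K := by
  obtain ⟨u, hu, v, hv, rfl⟩ := K.exists_eq_add_mul_of_mem_closure_insert hs hs2 ht
  rcases eq_or_ne v 0 with rfl | hv0
  · simpa using Or.inl hu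
  rcases eq_or_ne u 0 with rfl | hu0
  · right
    simpa [mul_assoc] using K.mul_mem hv hs2
  refine absurd ?_ hs
  have hs_eq : s = ((u + v * s) * (u + v * s) - u * u - v * v * (s * s)) / (2 * u * v) := by
    field_simp
    ring
  rw [hs_eq]
  refine K.div_mem (K.sub_mem (K.sub_mem ht2 (K.mul_mem hu hu)) ?_) ?_
  · exact K.mul_mem (K.mul_mem hv hv) hs2
  · exact K.mul_mem (K.mul_mem (ofNat_mem K 2) hu) hv

end Subfield

noncomputable def sqrtClosure (S : Finset ℕ) : Subfield ℝ :=
  Subfield.closure {x : ℝ | ∃ q ∈ S, x = √q}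

theorem sqrtClosure_empty : sqrtClosure ∅ = ⊥ := by
  simp [sqrtClosure]

theorem sqrtClosure_insert_le (q : ℕ) (S : Finset ℕ) :
    sqrtClosure (insert q S) ≤ Subfield.closure (insert √q (sqrtClosure S : Set ℝ)) := by
  refine Subfield.closure_le.mpr ?_
  rintro _ ⟨r, hr, rfl⟩
  rcases Finset.mem_insert.mp hr with rfl | hr
  · exact Subfield.subset_closure (Set.mem_insert _ _)
  · exact Subfield.subset_closure <|
      Set.mem_insert_of_mem _ (Subfield.subset_closure ⟨r, hr, rfl⟩)

theorem irrational_sqrt_of_squarefree_of_dvd {n p : ℕ} (hn : Squarefree n) (hp : p.Prime)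
    (hpn : p ∣ n) : Irrational √n := by
  rw [irrational_sqrt_natCast_iff]
  rintro ⟨k, rfl⟩
  have hpk : p ∣ k := hp.dvd_mul.mp hpn |>.elim id id
  exact hp.not_isUnit (hn p (mul_dvd_mul hpk hpk))

theorem exists_squarefree_sqrt_mem_of_sqrt_mul_sqrt_mem {K : Subfield ℝ} {n p q : ℕ}
    (hn : Squarefree n) (hp : p.Prime) (hpn : p ∣ n) (hq : q.Prime) (hpq : p ≠ q)
    (h : √n * √q ∈ K) : ∃ m, Squarefree m ∧ p ∣ m ∧ √m ∈ K := by
  by_cases hqn : q ∣ n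
  · obtain ⟨m, rfl⟩ := hqn
    refine ⟨m, hn.squarefree_of_dvd (dvd_mul_left m q),
      ((Nat.coprime_primes hp hq).mpr hpq).dvd_of_dvd_mul_left hpn, ?_⟩
    have hq0 : (q : ℝ) ≠ 0 := by exact_mod_cast hq.ne_zero
    have hsqrt : √(q * m : ℕ) * √q = q * √m := by
      rw [Nat.cast_mul, sqrt_mul (Nat.cast_nonneg _), mul_right_comm,
        mul_self_sqrt (Nat.cast_nonneg _)]
    rw [hsqrt] at h
    simpa [hq0] using K.div_mem h (natCast_mem K q)
  · refine ⟨n * q, ?_, dvd_mul_of_dvd_left hpn q, ?_⟩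
    · have hnq : n.Coprime q := (hq.coprime_iff_not_dvd.mpr hqn).symm
      exact (Nat.squarefree_mul hnq).mpr ⟨hn, hq.squarefree⟩
    · rwa [Nat.cast_mul, sqrt_mul (Nat.cast_nonneg _)]

theorem sqrt_natCast_notMem_sqrtClosure {S : Finset ℕ} (hS : ∀ q ∈ S, q.Prime) {n p : ℕ}
    (hn : Squarefree n) (hp : p.Prime) (hpn : p ∣ n) (hpS : p ∉ S) :
    √n ∉ sqrtClosure S := by
  induction S using Finset.induction generalizing n p with
  | empty =>
    rw [sqrtClosure_empty]
    intro hmem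
    obtain ⟨r, hr⟩ := (bot_le : ⊥ ≤ (Rat.castHom ℝ).fieldRange) hmem
    exact irrational_sqrt_of_squarefree_of_dvd hn hp hpn ⟨r, hr⟩
  | @insert q S hqS ih =>
    intro hmem
    have hq : q.Prime := hS q (Finset.mem_insert_self q S)
    have hpq : p ≠ q := fun h => hpS (h ▸ Finset.mem_insert_self q S)
    have hS' : ∀ r ∈ S, r.Prime := fun r hr => hS r (Finset.mem_insert_of_mem hr)
    have hsq : √q ∉ sqrtClosure S := ih hS' hq.squarefree hq dvd_rfl hqS
    have ih' {m : ℕ} (hm : Squarefree m) (hpm : p ∣ m) : √m ∉ sqrtClosure S :=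
      ih hS' hm hp hpm (fun h => hpS (Finset.mem_insert_of_mem h))
    rcases (sqrtClosure S).mem_or_mul_mem_of_mem_closure_insert two_ne_zero hsq
      (by rw [mul_self_sqrt (Nat.cast_nonneg q)]; exact natCast_mem _ q)
      (by rw [mul_self_sqrt (Nat.cast_nonneg n)]; exact natCast_mem _ n)
      (sqrtClosure_insert_le q S hmem) with h | h
    · exact ih' hn hpn h
    · obtain ⟨m, hm, hpm, hmK⟩ :=
        exists_squarefree_sqrt_mem_of_sqrt_mul_sqrt_mem hn hp hpn hq hpq h
      exact ih' hm hpm hmK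

/-- for a prime p and a finite set S of primes with p ∉ S, √p does not lie
in the subfield of ℝ generated by {√q : q ∈ S}. -/
theorem stmt_6 (p : ℕ) (hp : p.Prime) (S : Finset ℕ) (hS : ∀ q ∈ S, Nat.Prime q)
    (hpS : p ∉ S) :
    Real.sqrt p ∉ Subfield.closure {x : ℝ | ∃ q ∈ S, x = Real.sqrt q} :=
  sqrt_natCast_notMem_sqrtClosure hS hp.squarefree hp dvd_rfl hpS
end

section
/- Let K be a subfield of ℝ and let M be an n×n real matrix (n ≥ 1) such that every entry M_{ij} with (i, j) ≠ (n, n) lies in K, the corner entry M_{nn} does not lie in K, and the leading principal (n−1)×(n−1) submatrix of M has nonzero determinant. Then det M ≠ 0. -/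
lemma det_mem_subfield {n : ℕ} (K : Subfield ℝ) (A : Matrix (Fin n) (Fin n) ℝ)
    (h : ∀ i j, A i j ∈ K) : A.det ∈ K := by
  rw [Matrix.det_apply']
  refine Subfield.sum_mem K fun σ _ => ?_
  refine mul_mem ?_ (Subfield.prod_mem K fun i _ => h _ _)
  rcases Int.units_eq_one_or (Equiv.Perm.sign σ) with hσ | hσ <;> simp [hσ, one_mem, neg_mem]

/-- if all entries of a real (n+1)×(n+1) matrix except the bottom-right
corner lie in a subfield K of ℝ, the corner does not lie in K, and the leading principal
n×n submatrix has nonzero determinant, then det M ≠ 0.  (Sizes n+1 ≥ 1 cover all sizes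
≥ 1; for n = 0 the empty submatrix has determinant 1 by convention.) -/
theorem stmt_7 (n : ℕ) (K : Subfield ℝ) (M : Matrix (Fin (n + 1)) (Fin (n + 1)) ℝ)
    (hK : ∀ i j : Fin (n + 1), (i, j) ≠ (Fin.last n, Fin.last n) → M i j ∈ K)
    (hcorner : M (Fin.last n) (Fin.last n) ∉ K)
    (hdet : (Matrix.of fun i j : Fin n => M i.castSucc j.castSucc).det ≠ 0) :
    M.det ≠ 0 := by
  set A := Matrix.of fun i j : Fin n => M i.castSucc j.castSucc with hAdef
  have hAmem : A.det ∈ K := by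
    refine det_mem_subfield K A fun i j => hK _ _ ?_
    simp [Prod.ext_iff, Fin.ext_iff]
    intro h
    exact absurd h (by omega)
  -- expansion along last row
  have hexp := Matrix.det_succ_row M (Fin.last n)
  rw [Fin.sum_univ_castSucc] at hexp
  have hsub : M.submatrix (Fin.last n).succAbove (Fin.last n).succAbove = A := by
    ext i j
    simp [Fin.succAbove_last, hAdef]
  have hsign : ((-1 : ℝ)) ^ ((Fin.last n : ℕ) + (Fin.last n : ℕ)) = 1 := by
    rw [← two_mul, pow_mul]
    norm_num
  rw [hsub, hsign, one_mul] at hexp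
  set S := ∑ i : Fin n, (-1 : ℝ) ^ ((Fin.last n : ℕ) + (i.castSucc : ℕ)) *
      M (Fin.last n) i.castSucc *
      (M.submatrix (Fin.last n).succAbove i.castSucc.succAbove).det with hSdef
  have hSmem : S ∈ K := by
    refine Subfield.sum_mem K fun i _ => ?_
    refine mul_mem (mul_mem ?_ ?_) ?_
    · rcases Nat.even_or_odd ((Fin.last n : ℕ) + (i.castSucc : ℕ)) with h | h
      · rw [h.neg_one_pow]; exact one_mem K
      · rw [h.neg_one_pow]; exact neg_mem (one_mem K)
    · refine hK _ _ ?_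
      simp [Prod.ext_iff, Fin.ext_iff]
      intro h; omega
    · refine det_mem_subfield K _ fun a b => hK _ _ ?_
      simp only [Matrix.submatrix_apply, Prod.ext_iff, not_and, Fin.succAbove_last]
      intro h
      exact absurd h (by simp [Fin.ext_iff]; omega)
  intro h0
  rw [h0] at hexp
  have : M (Fin.last n) (Fin.last n) = -S / A.det := by
    field_simp
    linarith [hexp]
  exact hcorner (this ▸ div_mem (neg_mem hSmem) hAmem)
end

section
/- Let M ≥ 1 and let a_0, …, a_{M−1} and b_0, …, b_{M−1} be natural numbers such that p_i := a_i + b_i + 1 is prime for every i, with p_0 < p_1 < … < p_{M−1}, and such that for all indices 0 ≤ i, j, k ≤ M−1, if a_j + b_k + 1 = p_i then i = j = k. Then for every choice of signs s : {0,…,M−1} × {0,…,M−1} → {−1, +1}, the M×M real matrix with (i, j) entry s(i, j) · √(a_i + b_j + 1) has rank M over ℝ; equivalently, its determinant is nonzero. -/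
/-!
Expanding the determinant gives `∑ σ, ±√N σ` with `N σ = ∏ i, (a (σ i) + b i + 1)`. Taking
`ℚ`-traces in a number field containing all `√(N σ · N 1)` shows that the terms with `N σ · N 1`
a perfect square already sum to zero, since `Tr √k = 0` whenever `k` is not a square. Only the
identity qualifies: for `σ ≠ 1` let `p` be the largest of the primes `a i + b i + 1` with
`σ i ≠ i`. Each factor of `N σ` is either a prime `a i + b i + 1 ≠ p` (`i` fixed) or smaller than
`2p` and different from `p` (`i` moved), so `p` divides `N σ · N 1` exactly once.
-/

open Finset Equiv Polynomial

theorem Algebra.trace_eq_zero_of_mul_self_eq_algebraMap {F K : Type*} [Field F] [Field K]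
    [Algebra F K] [FiniteDimensional F K] {x : K} {c : F} (hx : x * x = algebraMap F K c)
    (hxF : x ∉ (algebraMap F K).range) : Algebra.trace F K x = 0 := by
  have hroot : aeval x (X ^ 2 - C c) = 0 := by simp [sq, hx]
  have hmonic : (X ^ 2 - C c : F[X]).Monic := monic_X_pow_sub_C c two_ne_zero
  have hdeg : (X ^ 2 - C c : F[X]).natDegree = 2 := natDegree_X_pow_sub_C
  have hint : IsIntegral F x := ⟨_, hmonic, hroot⟩
  have hmin : minpoly F x = X ^ 2 - C c :=
    (eq_of_monic_of_dvd_of_natDegree_le (minpoly.monic hint) hmonic (minpoly.dvd F x hroot)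
      (hdeg.trans_le ((minpoly.two_le_natDegree_iff hint).mpr hxF))).symm
  rw [trace_eq_finrank_mul_minpoly_nextCoeff, hmin, nextCoeff_of_natDegree_pos (by omega), hdeg]
  simp

theorem ratCast_trace_sqrt_natCast (K : IntermediateField ℚ ℝ) [FiniteDimensional ℚ K] {k : ℕ}
    (hk : √k ∈ K) :
    ((Algebra.trace ℚ K ⟨√k, hk⟩ : ℚ) : ℝ) = if IsSquare k then Module.finrank ℚ K * √k else 0 := by
  split_ifs with hsq
  · obtain ⟨r, rfl⟩ := hsq
    have hr : √((r * r : ℕ) : ℝ) = r := by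
      rw [Nat.cast_mul, Real.sqrt_mul_self (Nat.cast_nonneg _)]
    have hz : (⟨_, hk⟩ : K) = algebraMap ℚ K r := Subtype.ext <| hr.trans (Rat.cast_natCast r).symm
    rw [hz, Algebra.trace_algebraMap, nsmul_eq_mul, hr]
    push_cast
    rfl
  · rw [Algebra.trace_eq_zero_of_mul_self_eq_algebraMap (c := (k : ℚ))
      (Subtype.ext (by simp [Real.mul_self_sqrt])), Rat.cast_zero]
    rintro ⟨q, hq⟩
    exact irrational_sqrt_natCast_iff.mpr hsq ⟨q, congrArg Subtype.val hq⟩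

theorem sum_filter_isSquare_mul_eq_zero {ι : Type*} [Fintype ι] (c : ι → ℚ) (n : ι → ℕ)
    {m : ℕ} (hm : m ≠ 0) (h : ∑ i, (c i : ℝ) * √(n i) = 0) :
    ∑ i with IsSquare (n i * m), (c i : ℝ) * √(n i) = 0 := by
  have hsqrt : ∀ i, √((n i * m : ℕ) : ℝ) = √(n i) * √m := fun i => by
    rw [Nat.cast_mul, Real.sqrt_mul (Nat.cast_nonneg _)]
  let K := IntermediateField.adjoin ℚ (Set.range fun i => √((n i * m : ℕ) : ℝ))
  have : FiniteDimensional ℚ K := IntermediateField.finiteDimensional_adjoin <| by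
    rintro _ ⟨i, rfl⟩
    refine .of_pow two_pos ?_
    rw [sq, Real.mul_self_sqrt (Nat.cast_nonneg _)]
    exact isIntegral_natCast _
  let z : ι → K := fun i => ⟨_, IntermediateField.subset_adjoin _ _ (Set.mem_range_self i)⟩
  have hsum : ∑ i, c i • z i = 0 := Subtype.ext <| by
    calc ((∑ i, c i • z i : K) : ℝ) = √m * ∑ i, (c i : ℝ) * √(n i) := by
          rw [IntermediateField.coe_sum, Finset.mul_sum]
          refine sum_congr rfl fun i _ => ?_
          rw [IntermediateField.coe_smul, Rat.smul_def, show (z i : ℝ) = _ from hsqrt i]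
          ring
      _ = 0 := by rw [h, mul_zero]
  have htrace := congrArg (fun q : ℚ => (q : ℝ)) (congrArg (Algebra.trace ℚ K) hsum)
  simp only [map_sum, map_smul, map_zero, smul_eq_mul, Rat.cast_sum, Rat.cast_mul, Rat.cast_zero,
    z, ratCast_trace_sqrt_natCast, mul_ite, mul_zero, ← sum_filter] at htrace
  simp only [hsqrt] at htrace
  have : (0 : ℝ) < Module.finrank ℚ K := by exact_mod_cast Module.finrank_pos
  have : (0 : ℝ) < √m := Real.sqrt_pos.mpr (by exact_mod_cast Nat.pos_of_ne_zero hm)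
  refine (mul_eq_zero.mp ?_).resolve_left (by positivity : (Module.finrank ℚ K : ℝ) * √m ≠ 0)
  rw [Finset.mul_sum]
  exact (sum_congr rfl fun i _ => by ring).trans htrace

theorem Prime.not_isSquare_mul_of_not_dvd {α : Type*} [CommMonoidWithZero α] [IsCancelMulZero α]
    {p n : α} (hp : Prime p) (hn : ¬p ∣ n) : ¬IsSquare (p * n) := by
  rintro ⟨r, hr⟩
  obtain ⟨k, rfl⟩ := hp.dvd_of_dvd_pow (n := 2) ⟨n, by rw [sq, ← hr]⟩
  refine hn ⟨k * k, mul_left_cancel₀ hp.ne_zero ?_⟩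
  rw [hr, mul_mul_mul_comm, mul_assoc]

section

variable {ι : Type*} {a b : ι → ℕ}

theorem not_dvd_of_apply_ne_of_forall_le (hp : ∀ i, (a i + b i + 1).Prime)
    (h : ∀ i j k, a j + b k + 1 = a i + b i + 1 → i = j ∧ j = k) {σ : Perm ι} {i₀ : ι}
    (hσ : σ i₀ ≠ i₀) (hmax : ∀ i, σ i ≠ i → a i + b i ≤ a i₀ + b i₀) (i : ι) :
    ¬a i₀ + b i₀ + 1 ∣ a (σ i) + b i + 1 := by
  intro hdvd
  suffices heq : a (σ i) + b i + 1 = a i₀ + b i₀ + 1 by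
    obtain ⟨h₁, h₂⟩ := h i₀ (σ i) i heq
    exact hσ (by rw [h₁, h₂, h₂])
  by_cases hi : σ i = i
  · rw [hi] at hdvd ⊢
    exact ((Nat.prime_dvd_prime_iff_eq (hp i₀) (hp i)).mp hdvd).symm
  · have := hmax i hi
    have := hmax (σ i) (σ.injective.ne hi)
    exact Nat.eq_of_dvd_of_lt_two_mul (by omega) hdvd (by omega)

theorem not_isSquare_prod_mul_prod [Fintype ι] [DecidableEq ι] (hp : ∀ i, (a i + b i + 1).Prime)
    (h : ∀ i j k, a j + b k + 1 = a i + b i + 1 → i = j ∧ j = k) {σ : Perm ι} (hσ : σ ≠ 1) :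
    ¬IsSquare ((∏ i, (a (σ i) + b i + 1)) * ∏ i, (a i + b i + 1)) := by
  obtain ⟨i₀, hi₀, hmax⟩ := exists_max_image {i | σ i ≠ i} (fun i => a i + b i)
    (by simpa [Finset.Nonempty, Equiv.ext_iff] using hσ)
  simp only [mem_filter, mem_univ, true_and] at hi₀ hmax
  have hp₀ := (hp i₀).prime
  rw [← mul_prod_erase univ (fun i => a i + b i + 1) (mem_univ i₀), mul_left_comm]
  refine hp₀.not_isSquare_mul_of_not_dvd fun hdvd => ?_
  rcases hp₀.dvd_mul.mp hdvd with hdvd | hdvd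
  · obtain ⟨i, -, hi⟩ := hp₀.dvd_finsetProd_iff _ |>.mp hdvd
    exact not_dvd_of_apply_ne_of_forall_le hp h hi₀ hmax i hi
  · obtain ⟨i, hi, hdvd⟩ := hp₀.dvd_finsetProd_iff _ |>.mp hdvd
    have := (Nat.prime_dvd_prime_iff_eq (hp i₀) (hp i)).mp hdvd
    exact ne_of_mem_erase hi (h i₀ i i this.symm).1.symm

theorem Matrix.det_of_mul_sqrt [Fintype ι] [DecidableEq ι] (s : ι → ι → ℚ) (n : ι → ι → ℕ) :
    (Matrix.of fun i j => (s i j : ℝ) * √(n i j)).det =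
      ∑ σ : Perm ι, ((Perm.sign σ * ∏ i, s (σ i) i : ℚ) : ℝ) * √(∏ i, n (σ i) i : ℕ) := by
  rw [Matrix.det_apply]
  refine sum_congr rfl fun σ _ => ?_
  simp only [Units.smul_def, zsmul_eq_mul, Matrix.of_apply, prod_mul_distrib, Nat.cast_prod,
    Real.sqrt_prod _ fun i _ => Nat.cast_nonneg (n (σ i) i)]
  push_cast
  ring

theorem det_of_mul_sqrt_ne_zero [Fintype ι] [DecidableEq ι] (hp : ∀ i, (a i + b i + 1).Prime)
    (h : ∀ i j k, a j + b k + 1 = a i + b i + 1 → i = j ∧ j = k)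
    (s : ι → ι → ℚ) (hs : ∀ i, s i i ≠ 0) :
    (Matrix.of fun i j => (s i j : ℝ) * √(a i + b j + 1 : ℕ)).det ≠ 0 := by
  intro hdet
  rw [Matrix.det_of_mul_sqrt] at hdet
  have hN : ∏ i, (a i + b i + 1) ≠ 0 := prod_ne_zero_iff.mpr fun i _ => (hp i).ne_zero
  have hclass := sum_filter_isSquare_mul_eq_zero _ _ hN hdet
  rw [sum_eq_single_of_mem 1 (mem_filter.mpr ⟨mem_univ _, _, rfl⟩) fun σ hσ hσ₁ =>
    absurd (mem_filter.mp hσ).2 (not_isSquare_prod_mul_prod hp h hσ₁)] at hclass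
  refine mul_ne_zero ?_ (Real.sqrt_ne_zero'.mpr (by exact_mod_cast Nat.pos_of_ne_zero hN)) hclass
  simpa using prod_ne_zero_iff.mpr fun i _ => Rat.cast_ne_zero.mpr (hs i)

end

theorem stmt_8_general (M : ℕ) (a b : Fin M → ℕ)
    (hp : ∀ i, Nat.Prime (a i + b i + 1))
    (h : ∀ i j k : Fin M, a j + b k + 1 = a i + b i + 1 → i = j ∧ j = k)
    (s : Fin M → Fin M → ℝ) (hs : ∀ i j, s i j = -1 ∨ s i j = 1) :
    (Matrix.of fun i j : Fin M => s i j * Real.sqrt ((a i + b j + 1 : ℕ) : ℝ)).rank = M ∧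
    (Matrix.of fun i j : Fin M => s i j * Real.sqrt ((a i + b j + 1 : ℕ) : ℝ)).det ≠ 0 := by
  have hs_rat : ∀ i j, ∃ q : ℚ, q ≠ 0 ∧ s i j = q := fun i j => by
    rcases hs i j with hsij | hsij
    · exact ⟨-1, by norm_num, by simp [hsij]⟩
    · exact ⟨1, one_ne_zero, by simp [hsij]⟩
  choose q hq₀ hq using hs_rat
  have hdet : (Matrix.of fun i j : Fin M => s i j * √((a i + b j + 1 : ℕ) : ℝ)).det ≠ 0 := by
    simp_rw [hq]
    exact det_of_mul_sqrt_ne_zero hp h q fun i => hq₀ i i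
  refine ⟨?_, hdet⟩
  rw [Matrix.rank_of_isUnit _ ((Matrix.isUnit_iff_isUnit_det _).mpr hdet.isUnit), Fintype.card_fin]

/-- if p_i := a_i + b_i + 1 are primes with p_0 < … < p_{M−1} and
a_j + b_k + 1 = p_i only when i = j = k, then for any choice of signs s(i,j) ∈ {−1, +1},
the M×M matrix with entries s(i,j)·√(a_i + b_j + 1) has rank M over ℝ; equivalently its
determinant is nonzero. -/
theorem stmt_8 (M : ℕ) (hM : 1 ≤ M) (a b : Fin M → ℕ)
    (hp : ∀ i, Nat.Prime (a i + b i + 1))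
    (hmono : StrictMono fun i => a i + b i + 1)
    (h : ∀ i j k : Fin M, a j + b k + 1 = a i + b i + 1 → i = j ∧ j = k)
    (s : Fin M → Fin M → ℝ) (hs : ∀ i j, s i j = -1 ∨ s i j = 1) :
    (Matrix.of fun i j : Fin M => s i j * Real.sqrt ((a i + b j + 1 : ℕ) : ℝ)).rank = M ∧
    (Matrix.of fun i j : Fin M => s i j * Real.sqrt ((a i + b j + 1 : ℕ) : ℝ)).det ≠ 0 :=
  stmt_8_general M a b hp h s hs
end
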